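/- arXiv:1203.2727 — 8 statements merged into one kernel-verified Lean document; each statement's English description precedes it below -/
import Mathlib

section
/- Let H be an h-array with derived t-arrays T1 = (x_j^{(i)}) given by x_{b+1-a}^{(n-a)} = h_{a,b+1} - h_{a,b} and T3 = (z_j^{(i)}) given by z_{a+1}^{(n+a-b)} = h_{a+1,b+1} - h_{a,b}, for 0 ≤ a ≤ b ≤ n-1. Then H satisfies the rhombus condition RC(2) (h_{a-1,b} + h_{a,b} ≥ h_{a,b+1} + h_{a-1,b-1} for 1 ≤ a ≤ b < n) if and only if both T1 and T3 satisfy the interlacing condition IC(1) (t_j^{(i+1)} ≥ t_j^{(i)}). -/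
open Finset

/-- Interlacing condition IC(1): `t_j^(i+1) ≥ t_j^(i)` for `1 ≤ j ≤ i ≤ n-1`. -/
def IsIC1 (n : ℕ) (t : ℕ → ℕ → ℤ) : Prop :=
  ∀ i j : ℕ, 1 ≤ j → j ≤ i → i + 1 ≤ n → t i j ≤ t (i + 1) j

/-- Interlacing condition IC(2): `t_j^(i) ≥ t_{j+1}^(i+1)`. -/
def IsIC2 (n : ℕ) (t : ℕ → ℕ → ℤ) : Prop :=
  ∀ i j : ℕ, 1 ≤ j → j ≤ i → i + 1 ≤ n → t (i + 1) (j + 1) ≤ t i j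

/-- Rhombus condition RC(1): `h_{a,b} + h_{a-1,b-1} ≥ h_{a-1,b} + h_{a,b-1}` for `1 ≤ a < b ≤ n`. -/
def IsRC1 (n : ℕ) (h : ℕ → ℕ → ℤ) : Prop :=
  ∀ a b : ℕ, 1 ≤ a → a < b → b ≤ n →
    h (a - 1) b + h a (b - 1) ≤ h a b + h (a - 1) (b - 1)

/-- Rhombus condition RC(2): `h_{a-1,b} + h_{a,b} ≥ h_{a,b+1} + h_{a-1,b-1}` for `1 ≤ a ≤ b < n`. -/
def IsRC2 (n : ℕ) (h : ℕ → ℕ → ℤ) : Prop :=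
  ∀ a b : ℕ, 1 ≤ a → a ≤ b → b < n →
    h a (b + 1) + h (a - 1) (b - 1) ≤ h (a - 1) b + h a b

/-- Rhombus condition RC(3): `h_{a,b} + h_{a,b+1} ≥ h_{a+1,b+1} + h_{a-1,b}` for `1 ≤ a ≤ b < n`. -/
def IsRC3 (n : ℕ) (h : ℕ → ℕ → ℤ) : Prop :=
  ∀ a b : ℕ, 1 ≤ a → a ≤ b → b < n →
    h (a + 1) (b + 1) + h (a - 1) b ≤ h a b + h a (b + 1)

/-- First derived t-array `T1`: `x_{b+1-a}^{(n-a)} = h_{a,b+1} - h_{a,b}`,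
so `x_j^(i) = h_{n-i, n-i+j} - h_{n-i, n-i+j-1}`. -/
def dT1 (n : ℕ) (h : ℕ → ℕ → ℤ) (i j : ℕ) : ℤ :=
  h (n - i) (n - i + j) - h (n - i) (n - i + j - 1)

/-- Second derived t-array `T2`: `y_{a+1}^{(b+1)} = h_{a+1,b+1} - h_{a,b+1}`,
so `y_j^(i) = h_{j,i} - h_{j-1,i}`. -/
def dT2 (h : ℕ → ℕ → ℤ) (i j : ℕ) : ℤ :=
  h j i - h (j - 1) i

/-- Third derived t-array `T3`: `z_{a+1}^{(n+a-b)} = h_{a+1,b+1} - h_{a,b}`,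
so `z_j^(i) = h_{j, n+j-i} - h_{j-1, n+j-1-i}`. -/
def dT3 (n : ℕ) (h : ℕ → ℕ → ℤ) (i j : ℕ) : ℤ :=
  h j (n + j - i) - h (j - 1) (n + j - 1 - i)

/-- The dual t-array: `s_j^(i) = -t_{i+1-j}^(i)`. -/
def dualT (t : ℕ → ℕ → ℤ) (i j : ℕ) : ℤ := - t i (i + 1 - j)

/-- The weight of a t-array: `w_i = Σ_{k=1}^i t_k^(i) - Σ_{k=1}^{i-1} t_k^(i-1)`. -/
def wt (t : ℕ → ℕ → ℤ) (i : ℕ) : ℤ :=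
  (∑ k ∈ Finset.Icc 1 i, t i k) - ∑ k ∈ Finset.Icc 1 (i - 1), t (i - 1) k

/-- The Gelfand–Zelevinsky exponent
`ε_j^(i)(T) = Σ_{1 ≤ h < j} (t_h^(i+1) - 2 t_h^(i) + t_h^(i-1)) + (t_j^(i+1) - t_j^(i))`. -/
def expo (t : ℕ → ℕ → ℤ) (i j : ℕ) : ℤ :=
  (∑ h ∈ Finset.Icc 1 (j - 1), (t (i + 1) h - 2 * t i h + t (i - 1) h)) +
    (t (i + 1) j - t i j)

/-- Boundary conditions for an h-array in `H(μ,ν,λ)`. -/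
def IsBoundary (n : ℕ) (mu nu lam : ℕ → ℤ) (h : ℕ → ℕ → ℤ) : Prop :=
  h 0 0 = 0 ∧
  (∀ i, 1 ≤ i → i ≤ n → h 0 i = ∑ k ∈ Finset.Icc 1 i, mu k) ∧
  (∀ i, 1 ≤ i → i ≤ n →
    h i n = (∑ k ∈ Finset.Icc 1 n, mu k) + ∑ k ∈ Finset.Icc 1 i, nu k) ∧
  (∀ i, 1 ≤ i → i ≤ n → h i i = ∑ k ∈ Finset.Icc 1 i, lam k)

/-- A weakly decreasing sequence of nonnegative integers of length `n`
(a polynomial dominant weight). -/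
def IsDomWeight (n : ℕ) (mu : ℕ → ℤ) : Prop :=
  (∀ i, 1 ≤ i → i + 1 ≤ n → mu (i + 1) ≤ mu i) ∧ (∀ i, 1 ≤ i → i ≤ n → 0 ≤ mu i)

/-- Proposition 2.5 (2): an h-array satisfies RC(2) iff both its first and third
derived t-arrays satisfy IC(1). -/
theorem rc2_iff_ic1_dT1_and_ic1_dT3 (n : ℕ) (h : ℕ → ℕ → ℤ) (h00 : h 0 0 = 0) :
    IsRC2 n h ↔ (IsIC1 n (dT1 n h) ∧ IsIC1 n (dT3 n h)) := by
  constructor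
  · intro hRC
    constructor
    · intro i j hj hji hin
      have key := hRC (n - i) (n - i + j - 1) (by omega) (by omega) (by omega)
      simp only [dT1]
      have e1 : n - i + j - 1 + 1 = n - i + j := by omega
      have e3 : n - i + j - 1 - 1 = n - (i + 1) + j - 1 := by omega
      have e2 : n - i - 1 = n - (i + 1) := by omega
      have e4 : n - i + j - 1 = n - (i + 1) + j := by omega
      rw [e1, e3, e2, e4] at key
      rw [e4]
      linarith
    · intro i j hj hji hin
      have key := hRC j (n + j - 1 - i) (by omega) (by omega) (by omega)
      simp only [dT3]
      have e1 : n + j - 1 - i + 1 = n + j - i := by omega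
      have e2 : n + j - 1 - i - 1 = n + j - 1 - (i + 1) := by omega
      have e3 : n + j - 1 - i = n + j - (i + 1) := by omega
      rw [e1, e2, e3] at key
      rw [e3]
      linarith
  · rintro ⟨h1, _⟩ a b ha hab hbn
    have key := h1 (n - a) (b + 1 - a) (by omega) (by omega) (by omega)
    simp only [dT1] at key
    have e1 : n - (n - a) = a := by omega
    have e2 : n - (n - a + 1) = a - 1 := by omega
    rw [e1, e2] at key
    have e3 : a + (b + 1 - a) = b + 1 := by omega
    have e4 : a + (b + 1 - a) - 1 = b := by omega
    have e5 : a - 1 + (b + 1 - a) = b := by omega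
    have e6 : a - 1 + (b + 1 - a) - 1 = b - 1 := by omega
    rw [e4, e6, e3, e5] at key
    linarith
end

section
/- Let H be an h-array and T1, T3 its first and third derived t-arrays (defined by x_{b+1-a}^{(n-a)} = h_{a,b+1} - h_{a,b} and z_{a+1}^{(n+a-b)} = h_{a+1,b+1} - h_{a,b}, respectively). Then T3 satisfies the interlacing condition IC(1) if and only if T1 satisfies IC(1). Similarly, with T2 defined by y_{a+1}^{(b+1)} = h_{a+1,b+1} - h_{a,b+1}, T3 satisfies IC(2) if and only if T2 satisfies IC(2). -/
open Finset

/-- Subtraction-free form of RC(2). -/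
def RC2' (n : ℕ) (h : ℕ → ℕ → ℤ) : Prop :=
  ∀ a c : ℕ, a + c + 1 < n →
    h (a + 1) (a + c + 2) + h a (a + c) ≤ h a (a + c + 1) + h (a + 1) (a + c + 1)

/-- Subtraction-free form of RC(3). -/
def RC3' (n : ℕ) (h : ℕ → ℕ → ℤ) : Prop :=
  ∀ a c : ℕ, a + c + 1 < n →
    h (a + 2) (a + c + 2) + h a (a + c + 1) ≤ h (a + 1) (a + c + 1) + h (a + 1) (a + c + 2)

lemma ic1_dT3_iff_rc2 (n : ℕ) (h : ℕ → ℕ → ℤ) : IsIC1 n (dT3 n h) ↔ RC2' n h := by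
  constructor
  · intro H a c hc
    have := H (n - 1 - c) (a + 1) (by omega) (by omega) (by omega)
    simp only [dT3] at this
    rw [show n + (a + 1) - (n - 1 - c) = a + c + 2 by omega,
        show n + (a + 1) - 1 - (n - 1 - c) = a + c + 1 by omega,
        show a + 1 - 1 = a by omega,
        show n + (a + 1) - (n - 1 - c + 1) = a + c + 1 by omega,
        show n + (a + 1) - 1 - (n - 1 - c + 1) = a + c by omega] at this
    linarith
  · intro H i j hj hji hin
    obtain ⟨a, rfl⟩ : ∃ a, j = a + 1 := ⟨j - 1, by omega⟩
    have := H a (n - 1 - i) (by omega)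
    simp only [dT3]
    rw [show n + (a + 1) - i = a + (n - 1 - i) + 2 by omega,
        show n + (a + 1) - 1 - i = a + (n - 1 - i) + 1 by omega,
        show n + (a + 1) - (i + 1) = a + (n - 1 - i) + 1 by omega,
        show n + (a + 1) - 1 - (i + 1) = a + (n - 1 - i) by omega,
        show a + 1 - 1 = a by omega]
    linarith

lemma ic1_dT1_iff_rc2 (n : ℕ) (h : ℕ → ℕ → ℤ) : IsIC1 n (dT1 n h) ↔ RC2' n h := by
  constructor
  · intro H a c hc
    have := H (n - 1 - a) (c + 1) (by omega) (by omega) (by omega)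
    simp only [dT1] at this
    rw [show n - (n - 1 - a) = a + 1 by omega,
        show n - (n - 1 - a + 1) = a by omega] at this
    rw [show a + 1 + (c + 1) - 1 = a + c + 1 by omega,
        show a + 1 + (c + 1) = a + c + 2 by omega,
        show a + (c + 1) - 1 = a + c by omega,
        show a + (c + 1) = a + c + 1 by omega] at this
    linarith
  · intro H i j hj hji hin
    have := H (n - i - 1) (j - 1) (by omega)
    simp only [dT1]
    rw [show n - i = n - i - 1 + 1 by omega,
        show n - (i + 1) = n - i - 1 by omega]
    rw [show n - i - 1 + 1 + j - 1 = n - i - 1 + (j - 1) + 1 by omega,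
        show n - i - 1 + 1 + j = n - i - 1 + (j - 1) + 2 by omega,
        show n - i - 1 + j - 1 = n - i - 1 + (j - 1) by omega,
        show n - i - 1 + j = n - i - 1 + (j - 1) + 1 by omega]
    linarith

lemma ic2_dT3_iff_rc3 (n : ℕ) (h : ℕ → ℕ → ℤ) : IsIC2 n (dT3 n h) ↔ RC3' n h := by
  constructor
  · intro H a c hc
    have := H (n - 1 - c) (a + 1) (by omega) (by omega) (by omega)
    simp only [dT3] at this
    rw [show n + (a + 1 + 1) - (n - 1 - c + 1) = a + c + 2 by omega,
        show n + (a + 1 + 1) - 1 - (n - 1 - c + 1) = a + c + 1 by omega,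
        show a + 1 + 1 - 1 = a + 1 by omega,
        show n + (a + 1) - (n - 1 - c) = a + c + 2 by omega,
        show n + (a + 1) - 1 - (n - 1 - c) = a + c + 1 by omega,
        show a + 1 - 1 = a by omega] at this
    linarith
  · intro H i j hj hji hin
    obtain ⟨a, rfl⟩ : ∃ a, j = a + 1 := ⟨j - 1, by omega⟩
    have := H a (n - 1 - i) (by omega)
    simp only [dT3]
    rw [show a + 1 + 1 = a + 2 by omega,
        show n + (a + 2) - (i + 1) = a + (n - 1 - i) + 2 by omega,
        show n + (a + 2) - 1 - (i + 1) = a + (n - 1 - i) + 1 by omega,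
        show a + 2 - 1 = a + 1 by omega,
        show n + (a + 1) - i = a + (n - 1 - i) + 2 by omega,
        show n + (a + 1) - 1 - i = a + (n - 1 - i) + 1 by omega,
        show a + 1 - 1 = a by omega]
    linarith

lemma ic2_dT2_iff_rc3 (n : ℕ) (h : ℕ → ℕ → ℤ) : IsIC2 n (dT2 h) ↔ RC3' n h := by
  constructor
  · intro H a c hc
    have := H (a + c + 1) (a + 1) (by omega) (by omega) (by omega)
    simp only [dT2] at this
    rw [show a + 1 + 1 - 1 = a + 1 by omega, show a + 1 - 1 = a by omega,
        show a + c + 1 + 1 = a + c + 2 by omega,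
        show a + 1 + 1 = a + 2 by omega] at this
    linarith
  · intro H i j hj hji hin
    obtain ⟨a, rfl⟩ : ∃ a, j = a + 1 := ⟨j - 1, by omega⟩
    obtain ⟨c, rfl⟩ : ∃ c, i = a + 1 + c := ⟨i - (a + 1), by omega⟩
    have := H a c (by omega)
    simp only [dT2]
    rw [show a + 1 + 1 = a + 2 by omega,
        show a + 2 - 1 = a + 1 by omega,
        show a + 1 - 1 = a by omega,
        show a + 1 + c + 1 = a + c + 2 by omega,
        show a + 1 + c = a + c + 1 by omega]
    linarith

/-- Proposition 2.5 (4),(5): `T3` satisfies IC(1) iff `T1` does, and `T3`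
satisfies IC(2) iff `T2` does. -/
theorem ic_dT3_iff (n : ℕ) (h : ℕ → ℕ → ℤ) (h00 : h 0 0 = 0) :
    (IsIC1 n (dT3 n h) ↔ IsIC1 n (dT1 n h)) ∧
      (IsIC2 n (dT3 n h) ↔ IsIC2 n (dT2 h)) := by
  exact ⟨(ic1_dT3_iff_rc2 n h).trans (ic1_dT1_iff_rc2 n h).symm,
    (ic2_dT3_iff_rc3 n h).trans (ic2_dT2_iff_rc3 n h).symm⟩
end

section
/- An h-array H ∈ Z^{(n+1)(n+2)/2} is a hive (i.e. satisfies all three rhombus conditions RC(1), RC(2), RC(3)) if and only if both of its derived t-arrays T1(H) and T2(H) are Gelfand-Tsetlin patterns (i.e. satisfy both interlacing conditions IC(1) and IC(2)). -/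
open Finset

lemma hcongr (h : ℕ → ℕ → ℤ) {a a' b b' : ℕ} (ha : a = a') (hb : b = b') :
    h a b = h a' b' := by rw [ha, hb]

/-- Theorem 2.6: an h-array is a hive iff its derived t-arrays `T1` and `T2`
are Gelfand–Tsetlin patterns. -/
theorem hive_iff_dT1_dT2_GT (n : ℕ) (h : ℕ → ℕ → ℤ) (h00 : h 0 0 = 0) :
    (IsRC1 n h ∧ IsRC2 n h ∧ IsRC3 n h) ↔
      ((IsIC1 n (dT1 n h) ∧ IsIC2 n (dT1 n h)) ∧
        (IsIC1 n (dT2 h) ∧ IsIC2 n (dT2 h))) := by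
  constructor
  · rintro ⟨r1, r2, r3⟩
    refine ⟨⟨?_, ?_⟩, ?_, ?_⟩
    · -- IC1(T1) from RC2
      intro i j hj hji hin
      simp only [dT1]
      have H := r2 (n - i) (n - i + j - 1) (by omega) (by omega) (by omega)
      have E1 := hcongr h (rfl : n - i = n - i) (show n - i + j - 1 + 1 = n - i + j by omega)
      have E2 := hcongr h (show n - i - 1 = n - (i+1) by omega)
        (show n - i + j - 1 - 1 = n - (i+1) + j - 1 by omega)
      have E3 := hcongr h (show n - i - 1 = n - (i+1) by omega)
        (show n - i + j - 1 = n - (i+1) + j by omega)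
      linarith
    · -- IC2(T1) from RC1
      intro i j hj hji hin
      simp only [dT1]
      have H := r1 (n - i) (n - i + j) (by omega) (by omega) (by omega)
      have E1 := hcongr h (show n - (i+1) = n - i - 1 by omega)
        (show n - (i+1) + (j+1) = n - i + j by omega)
      have E2 := hcongr h (show n - (i+1) = n - i - 1 by omega)
        (show n - (i+1) + (j+1) - 1 = n - i + j - 1 by omega)
      linarith
    · -- IC1(T2) from RC1
      intro i j hj hji hin
      simp only [dT2]
      have H := r1 j (i + 1) (by omega) (by omega) (by omega)
      have E1 := hcongr h (rfl : j = j) (show i + 1 - 1 = i by omega)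
      have E2 := hcongr h (rfl : j - 1 = j - 1) (show i + 1 - 1 = i by omega)
      linarith
    · -- IC2(T2) from RC3
      intro i j hj hji hin
      simp only [dT2]
      have H := r3 j i (by omega) (by omega) (by omega)
      have E1 := hcongr h (show j + 1 - 1 = j by omega) (rfl : i + 1 = i + 1)
      linarith
  · rintro ⟨⟨i11, i21⟩, i12, i22⟩
    refine ⟨?_, ?_, ?_⟩
    · -- RC1 from IC1(T2)
      intro a b ha hab hbn
      have H := i12 (b - 1) a ha (by omega) (by omega)
      simp only [dT2] at H
      have E1 := hcongr h (rfl : a = a) (show b - 1 + 1 = b by omega)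
      have E2 := hcongr h (rfl : a - 1 = a - 1) (show b - 1 + 1 = b by omega)
      linarith
    · -- RC2 from IC1(T1)
      intro a b ha hab hbn
      have H := i11 (n - a) (b - a + 1) (by omega) (by omega) (by omega)
      simp only [dT1] at H
      have E1 := hcongr h (show n - (n - a) = a by omega)
        (show n - (n - a) + (b - a + 1) = b + 1 by omega)
      have E2 := hcongr h (show n - (n - a) = a by omega)
        (show n - (n - a) + (b - a + 1) - 1 = b by omega)
      have E3 := hcongr h (show n - (n - a + 1) = a - 1 by omega)
        (show n - (n - a + 1) + (b - a + 1) = b by omega)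
      have E4 := hcongr h (show n - (n - a + 1) = a - 1 by omega)
        (show n - (n - a + 1) + (b - a + 1) - 1 = b - 1 by omega)
      linarith
    · -- RC3 from IC2(T2)
      intro a b ha hab hbn
      have H := i22 b a ha hab hbn
      simp only [dT2] at H
      have E1 := hcongr h (show a + 1 - 1 = a by omega) (rfl : b + 1 = b + 1)
      linarith
end

section
/- Let H ∈ H(μ,ν,λ) be an h-array with the standard boundary conditions and let T1 = (x_j^{(i)}) and T2 = (y_j^{(i)}) be its derived t-arrays. Then T1 satisfies the interlacing condition IC(1) (x_j^{(i+1)} ≥ x_j^{(i)}) if and only if T2 satisfies the exponent bound ε_j^{(i)}(T2) ≤ μ_i - μ_{i+1} for all i, j, where ε_j^{(i)}(T) = Σ_{1≤h<j} (t_h^{(i+1)} - 2t_h^{(i)} + t_h^{(i-1)}) + (t_j^{(i+1)} - t_j^{(i)}). -/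
/-! Summed over `h < j`, the second differences of `T2 = (h_{j,i} - h_{j-1,i})` telescope in the
row index, so `ε_j^(i)(T2)` is the drop `μ_i - μ_{i+1}` between consecutive increments of the top
row `h_{0,·}` plus the RC(2) defect of the rhombus with corner `(j, i)`. Thus the exponent bound
is RC(2), and so is IC(1) for `T1`, whose entries are the increments of `h` along its rows. -/

open Finset

theorem Finset.sum_Icc_one_sub_pred {M : Type*} [AddCommGroup M] (f : ℕ → M) (m : ℕ) :
    ∑ k ∈ Icc 1 m, (f k - f (k - 1)) = f m - f 0 := by
  induction m with
  | zero => simp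
  | succ m ih =>
    rw [sum_Icc_succ_top (by omega), ih, Nat.add_sub_cancel]
    abel

theorem isIC1_dT1_iff_isRC2 (n : ℕ) (h : ℕ → ℕ → ℤ) : IsIC1 n (dT1 n h) ↔ IsRC2 n h := by
  constructor
  · intro hIC a b ha hab hbn
    have hrow := hIC (n - a) (b + 1 - a) (by omega) (by omega) (by omega)
    simp only [dT1] at hrow
    rw [show n - (n - a) = a by omega, show a + (b + 1 - a) = b + 1 by omega,
      show n - (n - a + 1) = a - 1 by omega, show a - 1 + (b + 1 - a) = b by omega,
      Nat.add_sub_cancel] at hrow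
    linarith
  · intro hRC i j hj hji hin
    have hrho := hRC (n - i) (n - i + j - 1) (by omega) (by omega) (by omega)
    simp only [dT1]
    rw [show n - i + j - 1 + 1 = n - i + j by omega] at hrho
    rw [show n - (i + 1) + j = n - i + j - 1 by omega, show n - (i + 1) = n - i - 1 by omega]
    linarith

theorem expo_dT2 (h : ℕ → ℕ → ℤ) (i j : ℕ) :
    expo (dT2 h) i j =
      (h 0 i - h 0 (i - 1)) - (h 0 (i + 1) - h 0 i) +
        (h j (i + 1) + h (j - 1) (i - 1) - h (j - 1) i - h j i) := by
  have hsum : ∑ k ∈ Icc 1 (j - 1), (dT2 h (i + 1) k - 2 * dT2 h i k + dT2 h (i - 1) k) =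
      (h (j - 1) (i + 1) - 2 * h (j - 1) i + h (j - 1) (i - 1)) -
        (h 0 (i + 1) - 2 * h 0 i + h 0 (i - 1)) :=
    (sum_congr rfl fun k _ => by simp only [dT2]; ring).trans
      (sum_Icc_one_sub_pred (fun k => h k (i + 1) - 2 * h k i + h k (i - 1)) (j - 1))
  rw [expo, hsum]
  simp only [dT2]
  ring

section Boundary

variable {n : ℕ} {mu nu lam : ℕ → ℤ} {h : ℕ → ℕ → ℤ}

theorem IsBoundary.sub_pred_eq (hbd : IsBoundary n mu nu lam h) {i : ℕ} (hi : 1 ≤ i)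
    (hin : i ≤ n) : h 0 i - h 0 (i - 1) = mu i := by
  obtain ⟨i, rfl⟩ : ∃ i', i = i' + 1 := ⟨i - 1, by omega⟩
  have hprev : h 0 i = ∑ k ∈ Icc 1 i, mu k := by
    rcases Nat.eq_zero_or_pos i with rfl | hpos
    · simpa using hbd.1
    · exact hbd.2.1 i hpos (by omega)
  rw [hbd.2.1 (i + 1) hi hin, Nat.add_sub_cancel, hprev, sum_Icc_succ_top (by omega)]
  ring

theorem IsBoundary.expo_dT2_eq (hbd : IsBoundary n mu nu lam h) {i : ℕ} (j : ℕ) (hi : 1 ≤ i)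
    (hin : i + 1 ≤ n) :
    expo (dT2 h) i j =
      mu i - mu (i + 1) + (h j (i + 1) + h (j - 1) (i - 1) - h (j - 1) i - h j i) := by
  have hsucc := hbd.sub_pred_eq (i := i + 1) (by omega) hin
  rw [Nat.add_sub_cancel] at hsucc
  rw [expo_dT2, hbd.sub_pred_eq hi (by omega), hsucc]

theorem IsBoundary.isRC2_iff_expo_dT2_le (hbd : IsBoundary n mu nu lam h) :
    IsRC2 n h ↔
      ∀ i j, 1 ≤ j → j ≤ i → i + 1 ≤ n → expo (dT2 h) i j ≤ mu i - mu (i + 1) := by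
  constructor
  · intro hRC i j hj hji hin
    rw [hbd.expo_dT2_eq j (by omega) hin]
    linarith [hRC j i hj hji hin]
  · intro hexpo a b ha hab hbn
    have hbound := hexpo b a ha hab hbn
    rw [hbd.expo_dT2_eq a (by omega) hbn] at hbound
    linarith

end Boundary

theorem ic1_dT1_iff_expo_dT2_general (n : ℕ) (mu nu lam : ℕ → ℤ) (h : ℕ → ℕ → ℤ)
    (hbd : IsBoundary n mu nu lam h) :
    IsIC1 n (dT1 n h) ↔
      (∀ i j, 1 ≤ j → j ≤ i → i + 1 ≤ n →
        expo (dT2 h) i j ≤ mu i - mu (i + 1)) :=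
  (isIC1_dT1_iff_isRC2 n h).trans hbd.isRC2_iff_expo_dT2_le

/-- Proposition 3.4: `T1(H)` satisfies IC(1) iff the exponents of `T2(H)` are
bounded by `μ_i - μ_{i+1}`. -/
theorem ic1_dT1_iff_expo_dT2 (n : ℕ) (mu nu lam : ℕ → ℤ) (h : ℕ → ℕ → ℤ)
    (hmu : IsDomWeight n mu) (hnu : IsDomWeight n nu) (hlam : IsDomWeight n lam)
    (hbd : IsBoundary n mu nu lam h) :
    IsIC1 n (dT1 n h) ↔
      (∀ i j, 1 ≤ j → j ≤ i → i + 1 ≤ n →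
        expo (dT2 h) i j ≤ mu i - mu (i + 1)) :=
  ic1_dT1_iff_expo_dT2_general n mu nu lam h hbd
end

section
/- Let H be an h-array with derived t-arrays T1 = (x_j^{(i)}) and T2 = (y_j^{(i)}). Then T1 satisfies the interlacing condition IC(2) (x_j^{(i)} ≥ x_{j+1}^{(i+1)} for all 1 ≤ j ≤ i ≤ n-1) if and only if T2 satisfies IC(1) (y_j^{(i+1)} ≥ y_j^{(i)} for all 1 ≤ j ≤ i ≤ n-1). -/
open Finset

/-- Proposition 3.5: `T1(H)` satisfies IC(2) iff `T2(H)` satisfies IC(1). -/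
theorem ic2_dT1_iff_ic1_dT2 (n : ℕ) (h : ℕ → ℕ → ℤ) (h00 : h 0 0 = 0) :
    IsIC2 n (dT1 n h) ↔ IsIC1 n (dT2 h) := by
  constructor
  · intro H i j hj hji hin
    have key := H (n - j) (i + 1 - j) (by omega) (by omega) (by omega)
    simp only [dT1] at key
    rw [show n - (n - j + 1) = j - 1 from by omega,
        show n - (n - j) = j from by omega,
        show j - 1 + (i + 1 - j + 1) = i + 1 from by omega,
        show j + (i + 1 - j) = i + 1 from by omega,
        show i + 1 - 1 = i from by omega] at key
    simp only [dT2]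
    linarith
  · intro H i j hj hji hin
    have key := H (n - i + j - 1) (n - i) (by omega) (by omega) (by omega)
    simp only [dT2] at key
    rw [show n - i + j - 1 + 1 = n - i + j from by omega,
        show n - i - 1 = n - (i + 1) from by omega] at key
    simp only [dT1]
    rw [show n - (i + 1) + (j + 1) = n - i + j from by omega,
        show n - i + j - 1 = n - i + j - 1 from rfl]
    linarith
end

section
/- Let H ∈ H(μ,ν,λ) with derived t-arrays T1 and T2, and let T1* be the dual array of T1 (defined by s_j^{(i)} = -x_{i+1-j}^{(i)}). Then T1* satisfies the exponent bound ε_j^{(i)}(T1*) ≤ ν*_i - ν*_{i+1} for all i,j (where ν* = (-ν_n, …, -ν_1)) if and only if T2 satisfies the interlacing condition IC(2). -/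
open Finset

lemma dualT_dT1_eval (n : ℕ) (h : ℕ → ℕ → ℤ) (k j : ℕ) (hk : k ≤ n) (hj1 : 1 ≤ j)
    (hjk : j ≤ k + 1) :
    dualT (dT1 n h) k j = h (n - k) (n - j) - h (n - k) (n + 1 - j) := by
  unfold dualT dT1
  have e1 : n - k + (k + 1 - j) = n + 1 - j := by omega
  have e2 : n - k + (k + 1 - j) - 1 = n - j := by omega
  rw [e2, e1]; ring

lemma telescope_Icc (g : ℕ → ℤ) (m : ℕ) :
    ∑ k ∈ Finset.Icc 1 m, (g k - g (k - 1)) = g m - g 0 := by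
  induction m with
  | zero => simp
  | succ m ih =>
      rw [Finset.sum_Icc_succ_top (by omega), ih]
      simp only [Nat.add_sub_cancel]
      ring

lemma hn_eval (n : ℕ) (mu nu lam : ℕ → ℤ) (h : ℕ → ℕ → ℤ)
    (hbd : IsBoundary n mu nu lam h) (hn : 1 ≤ n) (a : ℕ) (ha : a ≤ n) :
    h a n = (∑ k ∈ Finset.Icc 1 n, mu k) + ∑ k ∈ Finset.Icc 1 a, nu k := by
  rcases Nat.eq_zero_or_pos a with rfl | hpos
  · simp [hbd.2.1 n hn le_rfl]
  · exact hbd.2.2.1 a hpos ha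

lemma key_iff (n : ℕ) (mu nu lam : ℕ → ℤ) (h : ℕ → ℕ → ℤ)
    (hbd : IsBoundary n mu nu lam h) (i j : ℕ) (hj : 1 ≤ j) (hji : j ≤ i)
    (hin : i + 1 ≤ n) :
    (expo (dualT (dT1 n h)) i j ≤
        (- nu (n + 1 - i)) - (- nu (n + 1 - (i + 1)))) ↔
      dT2 h (n - j + 1) (n - i + 1) ≤ dT2 h (n - j) (n - i) := by
  have hn1 : 1 ≤ n := by omega
  -- abbreviation for the "vertical second difference"
  set A : ℕ → ℤ := fun b => h (n - i - 1) b - 2 * h (n - i) b + h (n - i + 1) b with hA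
  -- the sum in expo telescopes
  have hsum : ∑ hh ∈ Finset.Icc 1 (j - 1),
      (dualT (dT1 n h) (i + 1) hh - 2 * dualT (dT1 n h) i hh
        + dualT (dT1 n h) (i - 1) hh) = A (n + 1 - j) - A n := by
    have : ∀ hh ∈ Finset.Icc 1 (j - 1),
        dualT (dT1 n h) (i + 1) hh - 2 * dualT (dT1 n h) i hh
          + dualT (dT1 n h) (i - 1) hh
          = (fun m => A (n - m)) hh - (fun m => A (n - m)) (hh - 1) := by
      intro hh hhm
      simp only [Finset.mem_Icc] at hhm
      rw [dualT_dT1_eval n h (i + 1) hh (by omega) hhm.1 (by omega),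
        dualT_dT1_eval n h i hh (by omega) hhm.1 (by omega),
        dualT_dT1_eval n h (i - 1) hh (by omega) hhm.1 (by omega)]
      have e1 : n - (i + 1) = n - i - 1 := by omega
      have e2 : n - (i - 1) = n - i + 1 := by omega
      have e3 : n - (hh - 1) = n + 1 - hh := by omega
      rw [e1, e2]
      simp only [hA, e3]
      ring
    rw [Finset.sum_congr rfl this, telescope_Icc (fun m => A (n - m)) (j - 1)]
    have e4 : n - (j - 1) = n + 1 - j := by omega
    simp only [e4, Nat.sub_zero]
  have hAn : A n = nu (n - i + 1) - nu (n - i) := by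
    have b1 := hn_eval n mu nu lam h hbd hn1 (n - i - 1) (by omega)
    have b2 := hn_eval n mu nu lam h hbd hn1 (n - i) (by omega)
    have b3 := hn_eval n mu nu lam h hbd hn1 (n - i + 1) (by omega)
    have s2 : ∑ k ∈ Finset.Icc 1 (n - i), nu k
        = (∑ k ∈ Finset.Icc 1 (n - i - 1), nu k) + nu (n - i) := by
      rw [show n - i = (n - i - 1) + 1 from by omega,
        Finset.sum_Icc_succ_top (by omega)]
      simp
    have s3 : ∑ k ∈ Finset.Icc 1 (n - i + 1), nu k
        = (∑ k ∈ Finset.Icc 1 (n - i), nu k) + nu (n - i + 1) := by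
      rw [Finset.sum_Icc_succ_top (by omega)]
    simp only [hA]
    rw [b1, b2, b3]; linarith [s2, s3]
  unfold expo
  rw [hsum, dualT_dT1_eval n h (i + 1) j (by omega) hj (by omega),
    dualT_dT1_eval n h i j (by omega) hj (by omega)]
  have e1 : n - (i + 1) = n - i - 1 := by omega
  have e5 : n + 1 - i = n - i + 1 := by omega
  have e6 : n + 1 - (i + 1) = n - i := by omega
  rw [e1, e5, e6, hAn]
  unfold dT2
  have e7 : n - j + 1 = n + 1 - j := by omega
  have e8 : n - i + 1 - 1 = n - i := by omega
  have e9 : n - j - 1 = n - j - 1 := rfl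
  rw [e7, e8]
  have e10 : n - i - 1 = (n - i) - 1 := rfl
  simp only [hA]
  constructor <;> intro H <;> linarith

/-- Proposition 3.6: the dual `T1*(H)` satisfies the exponent bounds
`ε_j^(i)(T1*) ≤ ν*_i - ν*_{i+1}` iff `T2(H)` satisfies IC(2). -/
theorem expo_dual_dT1_iff_ic2_dT2 (n : ℕ) (mu nu lam : ℕ → ℤ) (h : ℕ → ℕ → ℤ)
    (hmu : IsDomWeight n mu) (hnu : IsDomWeight n nu) (hlam : IsDomWeight n lam)
    (hbd : IsBoundary n mu nu lam h) :
    (∀ i j, 1 ≤ j → j ≤ i → i + 1 ≤ n →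
        expo (dualT (dT1 n h)) i j ≤
          (- nu (n + 1 - i)) - (- nu (n + 1 - (i + 1)))) ↔
      IsIC2 n (dT2 h) := by
  constructor
  · intro H i' j' hj' hji' hin'
    have hj : 1 ≤ n - i' := by omega
    have hji : n - i' ≤ n - j' := by omega
    have hin : (n - j') + 1 ≤ n := by omega
    have := (key_iff n mu nu lam h hbd (n - j') (n - i') hj hji hin).mp
      (H (n - j') (n - i') hj hji hin)
    have e1 : n - (n - i') = i' := by omega
    have e2 : n - (n - j') = j' := by omega
    rwa [e1, e2] at this
  · intro H i j hj hji hin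
    refine (key_iff n mu nu lam h hbd i j hj hji hin).mpr ?_
    exact H (n - j) (n - i) (by omega) (by omega) (by omega)
end

section
/- Let Y be a semistandard skew tableau with a_{i,j}(Y) the number of i's in row j. Then the reverse reading word of Y is a Yamanouchi word (lattice permutation) if and only if Σ_{k=1}^{j} a_{i+1,k}(Y) ≤ Σ_{k=1}^{j-1} a_{i,k}(Y) for all 1 ≤ j ≤ n and 1 ≤ i < n. In particular, the Yamanouchi condition implies a_{i,j}(Y) = 0 whenever i > j. -/
open Finset

/-- `cnt mu lam Y i j` is the number of entries equal to `i` in row `j` of the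
filling `Y` of the skew shape `lam/mu` (row `j` occupies columns `mu j + 1, …, lam j`). -/
def cnt (mu lam : ℕ → ℕ) (Y : ℕ → ℕ → ℕ) (i j : ℕ) : ℕ :=
  ((Finset.Icc (mu j + 1) (lam j)).filter (fun c => Y j c = i)).card

/-- Entries weakly increase from left to right in every row. -/
def RowWeak (n : ℕ) (mu lam : ℕ → ℕ) (Y : ℕ → ℕ → ℕ) : Prop :=
  ∀ j c c' : ℕ, 1 ≤ j → j ≤ n → mu j < c → c ≤ c' → c' ≤ lam j → Y j c ≤ Y j c'

/-- Entries strictly increase from top to bottom in every column. -/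
def ColStrict (n : ℕ) (mu lam : ℕ → ℕ) (Y : ℕ → ℕ → ℕ) : Prop :=
  ∀ j c : ℕ, 1 ≤ j → j + 1 ≤ n → mu j < c → c ≤ lam j → mu (j + 1) < c →
    c ≤ lam (j + 1) → Y j c < Y (j + 1) c

/-- All entries of the filling lie in `{1, …, n}`. -/
def EntriesIn (n : ℕ) (mu lam : ℕ → ℕ) (Y : ℕ → ℕ → ℕ) : Prop :=
  ∀ j c : ℕ, 1 ≤ j → j ≤ n → mu j < c → c ≤ lam j → 1 ≤ Y j c ∧ Y j c ≤ n

/-- The filling has content `nu`: the entry `k` appears `nu k` times. -/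
def HasContent (n : ℕ) (mu lam nu : ℕ → ℕ) (Y : ℕ → ℕ → ℕ) : Prop :=
  ∀ k, 1 ≤ k → k ≤ n → (∑ j ∈ Finset.Icc 1 n, cnt mu lam Y k j) = nu k

/-- The `j`-th row of the filling, read from left to right. -/
def rowWord (mu lam : ℕ → ℕ) (Y : ℕ → ℕ → ℕ) (j : ℕ) : List ℕ :=
  (List.range (lam j - mu j)).map (fun k => Y j (mu j + 1 + k))

/-- The reverse reading word: read the rows left to right, starting from the bottom row. -/
def revReadingWord (n : ℕ) (mu lam : ℕ → ℕ) (Y : ℕ → ℕ → ℕ) : List ℕ :=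
  ((List.range n).map (fun r => rowWord mu lam Y (n - r))).flatten

/-- A word `x_1 … x_r` is Yamanouchi (a lattice permutation) if every suffix
contains at least as many `a`'s as `(a+1)`'s, for every `a ≥ 1`. -/
def IsYamanouchiWord (w : List ℕ) : Prop :=
  ∀ s : List ℕ, s <:+ w → ∀ a : ℕ, 1 ≤ a → s.count (a + 1) ≤ s.count a

/-- A partition with at most `n` parts. -/
def IsPartition (n : ℕ) (lam : ℕ → ℕ) : Prop :=
  (∀ i, 1 ≤ i → lam (i + 1) ≤ lam i) ∧ ∀ i, n < i → lam i = 0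

/-- Normalisation: the filling vanishes outside the boxes of the skew shape `lam/mu`. -/
def NormFilling (n : ℕ) (mu lam : ℕ → ℕ) (Y : ℕ → ℕ → ℕ) : Prop :=
  ∀ j c, ¬(1 ≤ j ∧ j ≤ n ∧ mu j < c ∧ c ≤ lam j) → Y j c = 0

/-- A Littlewood–Richardson tableau of shape `lam/mu` and content `nu`:
a semistandard skew tableau with entries in `{1,…,n}` whose reverse reading
word is Yamanouchi. -/
def IsLR (n : ℕ) (mu lam nu : ℕ → ℕ) (Y : ℕ → ℕ → ℕ) : Prop :=
  RowWeak n mu lam Y ∧ ColStrict n mu lam Y ∧ EntriesIn n mu lam Y ∧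
    IsYamanouchiWord (revReadingWord n mu lam Y) ∧ HasContent n mu lam nu Y

/-! The suffixes of the reverse reading word are the words `t ++ (row j ⋯ row 1)` with `t` a
suffix of row `j + 1`. Rows are weakly increasing, so for the letters `i, i + 1` the critical
suffix of row `j + 1` is the one starting at its first entry `> i`: it contains every `i + 1` of
the row and no `i`, and the Yamanouchi condition for it is exactly the inequality
`∑_{k ≤ j+1} a_{i+1,k} ≤ ∑_{k ≤ j} a_{i,k}`. Conversely these inequalities bound every suffix.
Letting `i` and `j` go down together, they force `a_{i,j} = 0` for `i > j`. -/

namespace List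

theorem suffix_append_iff {s A B : List α} :
    s <:+ A ++ B ↔ s <:+ B ∨ ∃ t, t <:+ A ∧ s = t ++ B := by
  constructor
  · rintro ⟨p, hp⟩
    rcases append_eq_append_iff.mp hp with ⟨t, rfl, rfl⟩ | ⟨c, rfl, rfl⟩
    · exact .inr ⟨t, suffix_append p t, rfl⟩
    · exact .inl (suffix_append c s)
  · rintro (h | ⟨t, ht, rfl⟩)
    · exact suffix_append_of_suffix h
    · exact suffix_append_self_iff.mpr ht

theorem exists_suffix_notMem_count_eq [LinearOrder α] {l : List α} (hl : l.Pairwise (· ≤ ·))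
    {a b : α} (hab : a < b) : ∃ t, t <:+ l ∧ a ∉ t ∧ t.count b = l.count b := by
  induction l with
  | nil => exact ⟨[], suffix_refl _, not_mem_nil, rfl⟩
  | cons x l ih =>
    rcases le_or_gt x a with hxa | hax
    · obtain ⟨t, ht, hat, hcount⟩ := ih (pairwise_cons.mp hl).2
      refine ⟨t, ht.trans (suffix_cons x l), hat, ?_⟩
      rw [hcount, count_cons_of_ne (hxa.trans_lt hab).ne]
    · refine ⟨x :: l, suffix_refl _, fun ha => ?_, rfl⟩
      rcases mem_cons.mp ha with rfl | ha
      · exact lt_irrefl a hax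
      · exact (pairwise_cons.mp hl).1 a ha |>.not_gt hax

end List

def RowCountLattice (n : ℕ) (mu lam : ℕ → ℕ) (Y : ℕ → ℕ → ℕ) : Prop :=
  ∀ i j : ℕ, 1 ≤ i → i + 1 ≤ n → 1 ≤ j → j ≤ n →
    ∑ k ∈ Icc 1 j, cnt mu lam Y (i + 1) k ≤ ∑ k ∈ Icc 1 (j - 1), cnt mu lam Y i k

section ReadingWord

variable {n : ℕ} (mu lam : ℕ → ℕ) (Y : ℕ → ℕ → ℕ)

theorem revReadingWord_succ (m : ℕ) :
    revReadingWord (m + 1) mu lam Y = rowWord mu lam Y (m + 1) ++ revReadingWord m mu lam Y := by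
  simp [revReadingWord, List.range_succ_eq_map, Function.comp_def]

theorem count_rowWord (v j : ℕ) : (rowWord mu lam Y j).count v = cnt mu lam Y v j := by
  rw [rowWord, cnt, Finset.card_def, Finset.filter_val, Nat.Icc_eq_range', Multiset.filter_coe,
    Multiset.coe_card, Nat.add_sub_add_right, List.range'_eq_map_range, List.count_eq_countP,
    List.countP_map, List.countP_eq_length_filter, List.filter_map, List.length_map]
  rfl

theorem count_revReadingWord (v m : ℕ) :
    (revReadingWord m mu lam Y).count v = ∑ k ∈ Icc 1 m, cnt mu lam Y v k := by
  induction m with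
  | zero => rfl
  | succ m ih =>
    rw [revReadingWord_succ, List.count_append, ih, count_rowWord, sum_Icc_succ_top (by omega),
      add_comm]

theorem suffix_revReadingWord_iff {s : List ℕ} {m : ℕ} :
    s <:+ revReadingWord m mu lam Y ↔
      s = [] ∨ ∃ j < m, ∃ t, t <:+ rowWord mu lam Y (j + 1) ∧ s = t ++ revReadingWord j mu lam Y := by
  induction m with
  | zero => simp [revReadingWord]
  | succ m ih =>
    rw [revReadingWord_succ, List.suffix_append_iff, ih]
    constructor
    · rintro ((rfl | ⟨j, hj, t, ht, rfl⟩) | ⟨t, ht, rfl⟩)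
      · exact .inl rfl
      · exact .inr ⟨j, by omega, t, ht, rfl⟩
      · exact .inr ⟨m, by omega, t, ht, rfl⟩
    · rintro (rfl | ⟨j, hj, t, ht, rfl⟩)
      · exact .inl (.inl rfl)
      · rcases Nat.lt_succ_iff_lt_or_eq.mp hj with hj | rfl
        · exact .inl (.inr ⟨j, hj, t, ht, rfl⟩)
        · exact .inr ⟨t, ht, rfl⟩

theorem rowWord_pairwise_le (hrow : RowWeak n mu lam Y) {j : ℕ} (hj : 1 ≤ j) (hjn : j ≤ n) :
    (rowWord mu lam Y j).Pairwise (· ≤ ·) := by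
  rw [rowWord, List.pairwise_map]
  refine List.pairwise_lt_range.imp_of_mem fun ha hb hab => ?_
  rw [List.mem_range] at ha hb
  exact hrow j _ _ hj hjn (by omega) (by omega) (by omega)

theorem cnt_eq_zero_of_lt (hent : EntriesIn n mu lam Y) {v j : ℕ} (hj : 1 ≤ j) (hjn : j ≤ n)
    (hv : n < v) : cnt mu lam Y v j = 0 := by
  rw [cnt, card_eq_zero, filter_eq_empty_iff]
  intro c hc
  rw [mem_Icc] at hc
  have := (hent j c hj hjn (by omega) hc.2).2
  omega

theorem rowCountLattice_of_isYamanouchiWord (hrow : RowWeak n mu lam Y)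
    (hY : IsYamanouchiWord (revReadingWord n mu lam Y)) : RowCountLattice n mu lam Y := by
  intro i j hi _ hj hjn
  obtain ⟨j, rfl⟩ := Nat.exists_eq_add_of_le' hj
  obtain ⟨t, ht, hit, hcount⟩ :=
    List.exists_suffix_notMem_count_eq (rowWord_pairwise_le mu lam Y hrow hj hjn) (lt_add_one i)
  have hsuffix : t ++ revReadingWord j mu lam Y <:+ revReadingWord n mu lam Y :=
    (suffix_revReadingWord_iff mu lam Y).mpr (.inr ⟨j, by omega, t, ht, rfl⟩)
  have key := hY _ hsuffix i hi
  rw [List.count_append, List.count_append, hcount, List.count_eq_zero.mpr hit,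
    count_rowWord, count_revReadingWord, count_revReadingWord] at key
  rw [sum_Icc_succ_top (by omega), Nat.add_sub_cancel]
  omega

theorem isYamanouchiWord_of_rowCountLattice (hent : EntriesIn n mu lam Y)
    (h : RowCountLattice n mu lam Y) : IsYamanouchiWord (revReadingWord n mu lam Y) := by
  intro s hs a ha
  obtain rfl | ⟨j, hj, t, ht, rfl⟩ := (suffix_revReadingWord_iff mu lam Y).mp hs
  · simp
  rcases lt_or_ge a n with han | han
  · have key := h a (j + 1) ha han (by omega) hj
    rw [sum_Icc_succ_top (by omega), Nat.add_sub_cancel] at key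
    have hcount : t.count (a + 1) ≤ cnt mu lam Y (a + 1) (j + 1) :=
      count_rowWord mu lam Y (a + 1) (j + 1) ▸ ht.count_le (a + 1)
    rw [List.count_append, List.count_append, count_revReadingWord, count_revReadingWord]
    omega
  · have hnone : (revReadingWord n mu lam Y).count (a + 1) = 0 := by
      rw [count_revReadingWord]
      exact sum_eq_zero fun k hk =>
        cnt_eq_zero_of_lt mu lam Y hent (mem_Icc.mp hk).1 (mem_Icc.mp hk).2 (by omega)
    have := hs.count_le (a + 1)
    omega

theorem cnt_eq_zero_of_rowCountLattice (hent : EntriesIn n mu lam Y)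
    (h : RowCountLattice n mu lam Y) {i j : ℕ} (hj : 1 ≤ j) (hjn : j ≤ n) (hji : j < i) :
    cnt mu lam Y i j = 0 := by
  rcases le_or_gt i n with hin | hin
  · suffices hsum : ∀ j ≤ n, ∀ i, j < i → i ≤ n → ∑ k ∈ Icc 1 j, cnt mu lam Y i k = 0 from
      sum_eq_zero_iff.mp (hsum j hjn i hji hin) j (mem_Icc.mpr ⟨hj, le_rfl⟩)
    intro j
    induction j with
    | zero => simp
    | succ j ih =>
      intro hjn i hji hin
      obtain ⟨i, rfl⟩ := Nat.exists_eq_add_of_le' (show 1 ≤ i by omega)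
      have := h i (j + 1) (by omega) hin (by omega) hjn
      rw [Nat.add_sub_cancel, ih (by omega) i (by omega) (by omega)] at this
      omega
  · exact cnt_eq_zero_of_lt mu lam Y hent hj hjn hin

end ReadingWord

theorem yamanouchi_iff_count_general (n : ℕ) (lam mu : ℕ → ℕ) (Y : ℕ → ℕ → ℕ)
    (hrow : RowWeak n mu lam Y)
    (hent : EntriesIn n mu lam Y) :
    (IsYamanouchiWord (revReadingWord n mu lam Y) ↔
      ∀ i j : ℕ, 1 ≤ i → i + 1 ≤ n → 1 ≤ j → j ≤ n →
        ∑ k ∈ Finset.Icc 1 j, cnt mu lam Y (i + 1) k ≤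
          ∑ k ∈ Finset.Icc 1 (j - 1), cnt mu lam Y i k) ∧
    (IsYamanouchiWord (revReadingWord n mu lam Y) →
      ∀ i j : ℕ, 1 ≤ j → j ≤ n → j < i → cnt mu lam Y i j = 0) :=
  ⟨⟨rowCountLattice_of_isYamanouchiWord mu lam Y hrow,
      isYamanouchiWord_of_rowCountLattice mu lam Y hent⟩,
    fun hY _ _ hj hjn hji =>
      cnt_eq_zero_of_rowCountLattice mu lam Y hent
        (rowCountLattice_of_isYamanouchiWord mu lam Y hrow hY) hj hjn hji⟩

/-- For a semistandard skew tableau, the reverse reading word is Yamanouchi iff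
`Σ_{k=1}^j a_{i+1,k} ≤ Σ_{k=1}^{j-1} a_{i,k}` for all `1 ≤ j ≤ n`, `1 ≤ i < n`;
and the Yamanouchi condition forces `a_{i,j} = 0` for `i > j`. -/
theorem yamanouchi_iff_count (n : ℕ) (lam mu : ℕ → ℕ) (Y : ℕ → ℕ → ℕ)
    (hlam : IsPartition n lam) (hmu : IsPartition n mu)
    (hsub : ∀ j, mu j ≤ lam j)
    (hrow : RowWeak n mu lam Y) (hcol : ColStrict n mu lam Y)
    (hent : EntriesIn n mu lam Y) :
    (IsYamanouchiWord (revReadingWord n mu lam Y) ↔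
      ∀ i j : ℕ, 1 ≤ i → i + 1 ≤ n → 1 ≤ j → j ≤ n →
        ∑ k ∈ Finset.Icc 1 j, cnt mu lam Y (i + 1) k ≤
          ∑ k ∈ Finset.Icc 1 (j - 1), cnt mu lam Y i k) ∧
    (IsYamanouchiWord (revReadingWord n mu lam Y) →
      ∀ i j : ℕ, 1 ≤ j → j ≤ n → j < i → cnt mu lam Y i j = 0) :=
  yamanouchi_iff_count_general n lam mu Y hrow hent
end

section
/- There is a bijection between LR(λ/μ, ν), the set of Littlewood-Richardson tableaux of skew shape λ/μ and content ν, and H°(μ,ν,λ), the set of hives for GL_n with boundary determined by μ, ν, λ (i.e. h_{0,i} = μ_1+⋯+μ_i, h_{i,n} = Σμ + ν_1+⋯+ν_i, h_{i,i} = λ_1+⋯+λ_i). -/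
open Finset

/-!
Write `h_{a,b}` for the number of boxes of `μ` in the top `b` rows of a skew tableau plus the
number of its entries `≤ a` in these rows. The rhombus inequalities then say that every row has
a nonnegative number of entries `a` (RC(1)), that the tableau is column strict (RC(2)), and that
the top `b + 1` rows hold at most as many entries `a + 1` as the top `b` rows hold entries `a`
(RC(3)), which is the Yamanouchi condition on the reverse reading word of a tableau with weakly
increasing rows; the boundary values record `μ`, the content `ν` and the shape `λ`. Conversely,
differences of a hive's values give, for every row `j` and every `a`, the number of entries
`≤ a` that row `j` must have, and a weakly increasing row is determined by these numbers, so the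
two constructions are mutually inverse.
-/

section Boundary

variable {n : ℕ} {mu nu lam : ℕ → ℤ} {h : ℕ → ℕ → ℤ}

theorem IsBoundary.mu_side (hb : IsBoundary n mu nu lam h) {m : ℕ} (hm : m ≤ n) :
    h 0 m = ∑ k ∈ Icc 1 m, mu k := by
  rcases Nat.eq_zero_or_pos m with rfl | hpos
  · simpa using hb.1
  · exact hb.2.1 m hpos hm

theorem IsBoundary.nu_side (hb : IsBoundary n mu nu lam h) {m : ℕ} (hm : m ≤ n) :
    h m n = ∑ k ∈ Icc 1 n, mu k + ∑ k ∈ Icc 1 m, nu k := by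
  rcases Nat.eq_zero_or_pos m with rfl | hpos
  · simpa using hb.mu_side le_rfl
  · exact hb.2.2.1 m hpos hm

theorem IsBoundary.lam_side (hb : IsBoundary n mu nu lam h) {m : ℕ} (hm : m ≤ n) :
    h m m = ∑ k ∈ Icc 1 m, lam k := by
  rcases Nat.eq_zero_or_pos m with rfl | hpos
  · simpa using hb.1
  · exact hb.2.2.2 m hpos hm

end Boundary

namespace LRHive

theorem sum_Icc_one_eq_sum_pred_add {M : Type*} [AddCommMonoid M] (f : ℕ → M) {j : ℕ}
    (hj : 1 ≤ j) : ∑ i ∈ Icc 1 j, f i = ∑ i ∈ Icc 1 (j - 1), f i + f j := by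
  obtain ⟨j, rfl⟩ := Nat.exists_eq_add_of_le' hj
  simpa using sum_Icc_succ_top (by omega : 1 ≤ j + 1) f

theorem sum_Icc_one_sub_pred {G : Type*} [AddCommGroup G] (f : ℕ → G) (a : ℕ) :
    ∑ i ∈ Icc 1 a, (f i - f (i - 1)) = f a - f 0 := by
  induction a with
  | zero => simp
  | succ a ih => rw [sum_Icc_succ_top (by omega), ih]; simp

theorem sInf_le_iff_of_monotone {β : Type*} [Preorder β] {g : ℕ → β} (hg : Monotone g)
    {t : β} (hne : ∃ a, t ≤ g a) (a : ℕ) : sInf {a | t ≤ g a} ≤ a ↔ t ≤ g a :=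
  ⟨fun hle => (show t ≤ g (sInf {a | t ≤ g a}) from Nat.sInf_mem hne).trans (hg hle),
    fun ht => Nat.sInf_le ht⟩

theorem card_filter_le_eq_of_forall_le_iff {m L k a : ℕ} {f : ℕ → ℕ} (hk : m + k ≤ L)
    (hf : ∀ c ∈ Icc (m + 1) L, f c ≤ a ↔ c ≤ m + k) :
    #{c ∈ Icc (m + 1) L | f c ≤ a} = k := by
  have : {c ∈ Icc (m + 1) L | f c ≤ a} = Icc (m + 1) (m + k) := by
    ext c
    simp only [mem_filter, mem_Icc]
    constructor
    · rintro ⟨hc, hfc⟩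
      exact ⟨hc.1, (hf c (mem_Icc.2 hc)).1 hfc⟩
    · rintro hc
      exact ⟨⟨hc.1, by omega⟩, (hf c (mem_Icc.2 ⟨hc.1, by omega⟩)).2 hc.2⟩
  rw [this, Nat.card_Icc]
  omega

theorem le_iff_le_add_card_filter_le {m L a c : ℕ} {f : ℕ → ℕ}
    (hf : MonotoneOn f (Icc (m + 1) L)) (hc : c ∈ Icc (m + 1) L) :
    f c ≤ a ↔ c ≤ m + #{c' ∈ Icc (m + 1) L | f c' ≤ a} := by
  have hc' := mem_Icc.1 hc
  constructor
  · intro hfc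
    have hsub : Icc (m + 1) c ⊆ {c' ∈ Icc (m + 1) L | f c' ≤ a} := fun c' hc'' => by
      have hc'L : c' ∈ Icc (m + 1) L := mem_Icc.2 ⟨(mem_Icc.1 hc'').1, by grind⟩
      exact mem_filter.2 ⟨hc'L, (hf hc'L hc (mem_Icc.1 hc'').2).trans hfc⟩
    have := card_le_card hsub
    rw [Nat.card_Icc] at this
    omega
  · intro hcard
    by_contra! hfc
    have hsub : {c' ∈ Icc (m + 1) L | f c' ≤ a} ⊆ Icc (m + 1) (c - 1) := fun c' hc'' => by
      obtain ⟨hc'L, hfc'⟩ := mem_filter.1 hc''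
      refine mem_Icc.2 ⟨(mem_Icc.1 hc'L).1, ?_⟩
      by_contra! hlt
      have := hf hc hc'L (by omega)
      omega
    have := card_le_card hsub
    rw [Nat.card_Icc] at this
    omega

theorem isSuffix_append_cases {α : Type*} {s A B : List α} (h : s <:+ A ++ B) :
    s <:+ B ∨ ∃ s₁, s₁ <:+ A ∧ s = s₁ ++ B := by
  obtain ⟨t, ht⟩ := h
  rcases List.append_eq_append_iff.1 ht with ⟨a', h₁, h₂⟩ | ⟨c', h₁, h₂⟩
  · exact Or.inr ⟨a', ⟨t, h₁.symm⟩, h₂⟩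
  · exact Or.inl ⟨c', h₂.symm⟩

theorem lt_of_mem_dropWhile_le {α : Type*} [LinearOrder α] {w : List α}
    (hw : w.Pairwise (· ≤ ·)) {a x : α}
    (hx : x ∈ w.dropWhile (· ≤ a)) : a < x := by
  induction w with
  | nil => simp at hx
  | cons y w ih =>
    rw [List.dropWhile_cons] at hx
    split_ifs at hx with hy
    · exact ih hw.of_cons hx
    · rcases List.mem_cons.1 hx with rfl | hx
      · simpa using hy
      · exact lt_of_lt_of_le (by simpa using hy) (List.rel_of_pairwise_cons hw hx)

theorem count_dropWhile_le_of_lt {α : Type*} [LinearOrder α] (w : List α) {a b : α}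
    (hab : a < b) : (w.dropWhile (· ≤ a)).count b = w.count b := by
  have h₀ : (w.takeWhile (· ≤ a)).count b = 0 := List.count_eq_zero.2 fun hb =>
    hab.not_ge (by simpa using List.mem_takeWhile_imp hb)
  conv_rhs => rw [← List.takeWhile_append_dropWhile (p := (· ≤ a)) (l := w),
    List.count_append, h₀, zero_add]

section Tableau

variable {n : ℕ} {mu lam : ℕ → ℕ} {Y : ℕ → ℕ → ℕ}

theorem count_rowWord (i j : ℕ) : (rowWord mu lam Y j).count i = cnt mu lam Y i j := by
  have hrange :
      rowWord mu lam Y j = (List.range' (mu j + 1) (lam j + 1 - (mu j + 1))).map (Y j) := by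
    rw [rowWord, List.range'_eq_map_range, List.map_map,
      show lam j + 1 - (mu j + 1) = lam j - mu j by omega]
    rfl
  rw [hrange, List.count_eq_countP, List.countP_map, cnt, ← card_val, filter_val,
    ← Multiset.countP_eq_card_filter]
  exact (Multiset.coe_countP _ _).symm.trans (by congr)

theorem revReadingWord_succ (j : ℕ) :
    revReadingWord (j + 1) mu lam Y = rowWord mu lam Y (j + 1) ++ revReadingWord j mu lam Y := by
  rw [revReadingWord, List.range_succ_eq_map, List.map_cons, List.flatten_cons, List.map_map,
    revReadingWord]
  congr 2
  exact List.map_congr_left fun r _ => by simp only [Function.comp_apply]; congr 1; omega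

theorem count_revReadingWord (i : ℕ) :
    ∀ j, (revReadingWord j mu lam Y).count i = ∑ j' ∈ Icc 1 j, cnt mu lam Y i j'
  | 0 => by simp [revReadingWord]
  | j + 1 => by
    rw [revReadingWord_succ, List.count_append, count_rowWord, count_revReadingWord i j,
      sum_Icc_succ_top (by omega), add_comm]

theorem revReadingWord_suffix_of_le {j j' : ℕ} (h : j ≤ j') :
    revReadingWord j mu lam Y <:+ revReadingWord j' mu lam Y := by
  induction j', h using Nat.le_induction with
  | base => exact List.suffix_refl _
  | succ j' _ ih => exact ih.trans (revReadingWord_succ (Y := Y) j' ▸ List.suffix_append _ _)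

theorem eq_nil_or_eq_append_of_suffix_revReadingWord :
    ∀ {j : ℕ} {s : List ℕ}, s <:+ revReadingWord j mu lam Y →
      s = [] ∨ ∃ j' ∈ Icc 1 j, ∃ s₁, s₁ <:+ rowWord mu lam Y j' ∧
        s = s₁ ++ revReadingWord (j' - 1) mu lam Y
  | 0, s, hs => Or.inl (List.suffix_nil.1 hs)
  | j + 1, s, hs => by
    rw [revReadingWord_succ] at hs
    rcases isSuffix_append_cases hs with hs | ⟨s₁, hs₁, rfl⟩
    · rcases eq_nil_or_eq_append_of_suffix_revReadingWord hs with rfl | ⟨j', hj', hs'⟩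
      · exact Or.inl rfl
      · exact Or.inr ⟨j', mem_Icc.2 ⟨(mem_Icc.1 hj').1, by grind⟩, hs'⟩
    · exact Or.inr ⟨j + 1, mem_Icc.2 ⟨by omega, le_rfl⟩, s₁, hs₁, rfl⟩

theorem monotoneOn_row (hrow : RowWeak n mu lam Y) {j : ℕ} (hj : 1 ≤ j) (hjn : j ≤ n) :
    MonotoneOn (Y j) (Icc (mu j + 1) (lam j)) := fun c hc c' hc' hle =>
  hrow j c c' hj hjn (by grind) hle (mem_Icc.1 hc').2

theorem pairwise_rowWord (hrow : RowWeak n mu lam Y) {j : ℕ} (hj : 1 ≤ j) (hjn : j ≤ n) :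
    (rowWord mu lam Y j).Pairwise (· ≤ ·) := by
  refine List.pairwise_map.2 (List.pairwise_le_range.imp_of_mem fun hk hk' hle => ?_)
  exact monotoneOn_row hrow hj hjn (by grind) (by grind) (by omega)

def RowLattice (n : ℕ) (mu lam : ℕ → ℕ) (Y : ℕ → ℕ → ℕ) : Prop :=
  ∀ a b, 1 ≤ a → b + 1 ≤ n →
    ∑ j ∈ Icc 1 (b + 1), cnt mu lam Y (a + 1) j ≤ ∑ j ∈ Icc 1 b, cnt mu lam Y a j

theorem isYamanouchiWord_revReadingWord_iff (hrow : RowWeak n mu lam Y) :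
    IsYamanouchiWord (revReadingWord n mu lam Y) ↔ RowLattice n mu lam Y := by
  constructor
  · intro hyam a b ha hbn
    -- the suffix starting at the first entry `> a` of row `b + 1`
    set s₁ := (rowWord mu lam Y (b + 1)).dropWhile (· ≤ a)
    have hs : s₁ ++ revReadingWord b mu lam Y <:+ revReadingWord n mu lam Y :=
      (List.suffix_append_self_iff.2 (List.dropWhile_suffix _)).trans
        (revReadingWord_succ (Y := Y) b ▸ revReadingWord_suffix_of_le hbn)
    have hs₁a : s₁.count a = 0 := List.count_eq_zero.2 fun ha' =>
      (lt_irrefl a) (lt_of_mem_dropWhile_le (pairwise_rowWord hrow (by omega) hbn) ha')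
    have := hyam _ hs a ha
    rw [List.count_append, List.count_append, count_dropWhile_le_of_lt _ (by omega : a < a + 1),
      hs₁a, count_rowWord, count_revReadingWord, count_revReadingWord] at this
    rw [sum_Icc_succ_top (by omega)]
    omega
  · intro hL s hs a ha
    rcases eq_nil_or_eq_append_of_suffix_revReadingWord hs with rfl | ⟨j, hj, s₁, hs₁, rfl⟩
    · simp
    have hj := mem_Icc.1 hj
    have hcount := hs₁.count_le (a + 1)
    have hlat := hL a (j - 1) ha (by omega)
    rw [Nat.sub_add_cancel hj.1] at hlat
    rw [count_rowWord] at hcount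
    rw [List.count_append, List.count_append, count_revReadingWord, count_revReadingWord]
    rw [sum_Icc_one_eq_sum_pred_add _ hj.1] at hlat
    omega

theorem RowLattice.sum_cnt_eq_zero (hL : RowLattice n mu lam Y) :
    ∀ {i b : ℕ}, b < i → b ≤ n → ∑ j ∈ Icc 1 b, cnt mu lam Y i j = 0
  | 0, _, hb, _ => absurd hb (Nat.not_lt_zero _)
  | i + 1, 0, _, _ => by simp
  | i + 1, b + 1, hb, hbn => by
    have := hL i b (by omega) hbn
    rw [hL.sum_cnt_eq_zero (i := i) (b := b) (by omega) (by omega)] at this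
    omega

theorem RowLattice.le_row (hL : RowLattice n mu lam Y) {j c : ℕ} (hj : 1 ≤ j) (hjn : j ≤ n)
    (hc : c ∈ Icc (mu j + 1) (lam j)) : Y j c ≤ j := by
  by_contra! hlt
  have hcnt : 0 < cnt mu lam Y (Y j c) j := card_pos.2 ⟨c, mem_filter.2 ⟨hc, rfl⟩⟩
  have := hL.sum_cnt_eq_zero hlt hjn
  rw [sum_Icc_one_eq_sum_pred_add _ hj] at this
  omega

def cntLE (mu lam : ℕ → ℕ) (Y : ℕ → ℕ → ℕ) (a j : ℕ) : ℕ :=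
  #{c ∈ Icc (mu j + 1) (lam j) | Y j c ≤ a}

theorem cntLE_succ (a j : ℕ) :
    cntLE mu lam Y (a + 1) j = cntLE mu lam Y a j + cnt mu lam Y (a + 1) j := by
  simp only [cntLE, cnt, card_filter, ← sum_add_distrib]
  refine sum_congr rfl fun c _ => ?_
  split_ifs <;> omega

theorem cntLE_zero (hent : EntriesIn n mu lam Y) {j : ℕ} (hj : 1 ≤ j) (hjn : j ≤ n) :
    cntLE mu lam Y 0 j = 0 :=
  card_eq_zero.2 <| filter_false_of_mem fun c hc => by
    have := hent j c hj hjn (by grind) (mem_Icc.1 hc).2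
    omega

theorem cntLE_eq_sum_cnt (hent : EntriesIn n mu lam Y) {j : ℕ} (hj : 1 ≤ j) (hjn : j ≤ n) :
    ∀ a, cntLE mu lam Y a j = ∑ i ∈ Icc 1 a, cnt mu lam Y i j
  | 0 => by simp [cntLE_zero hent hj hjn]
  | a + 1 => by rw [cntLE_succ, sum_Icc_succ_top (by omega), cntLE_eq_sum_cnt hent hj hjn a]

theorem RowLattice.cntLE_of_le (hL : RowLattice n mu lam Y) {a j : ℕ} (hj : 1 ≤ j)
    (hjn : j ≤ n) (hja : j ≤ a) : cntLE mu lam Y a j = lam j - mu j := by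
  rw [cntLE, filter_true_of_mem fun c hc => (hL.le_row hj hjn hc).trans hja, Nat.card_Icc]
  omega

theorem RowLattice.cntLE_min (hL : RowLattice n mu lam Y) {a j j' : ℕ} (hj' : 1 ≤ j')
    (hjj' : j' ≤ j) (hjn : j ≤ n) : cntLE mu lam Y (min a j) j' = cntLE mu lam Y a j' := by
  rcases le_total a j with h | h
  · rw [min_eq_left h]
  · rw [min_eq_right h, hL.cntLE_of_le hj' (by omega) hjj',
      hL.cntLE_of_le hj' (by omega) (by omega)]

theorem cntLE_le_sub (a j : ℕ) : cntLE mu lam Y a j ≤ lam j - mu j := by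
  have := card_filter_le (Icc (mu j + 1) (lam j)) fun c => Y j c ≤ a
  rw [Nat.card_Icc] at this
  exact this.trans (by omega)

/-- By column strictness, the boxes of row `b` above an entry `≤ a + 1` of row `b + 1` carry
entries `≤ a`. -/
theorem add_cntLE_succ_le (hrow : RowWeak n mu lam Y) (hcol : ColStrict n mu lam Y) {a b : ℕ}
    (hb : 1 ≤ b) (hbn : b + 1 ≤ n) (hlam : lam (b + 1) ≤ lam b) (hmu : mu (b + 1) ≤ mu b) :
    mu (b + 1) + cntLE mu lam Y (a + 1) (b + 1) ≤ mu b + cntLE mu lam Y a b := by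
  set k := cntLE mu lam Y (a + 1) (b + 1)
  have hk : k ≤ lam (b + 1) - mu (b + 1) := cntLE_le_sub _ _
  have hsub : Icc (mu b + 1) (mu (b + 1) + k) ⊆ {c ∈ Icc (mu b + 1) (lam b) | Y b c ≤ a} := by
    intro c hc
    have hc := mem_Icc.1 hc
    have hc' : c ∈ Icc (mu (b + 1) + 1) (lam (b + 1)) := mem_Icc.2 ⟨by omega, by omega⟩
    have hbelow := (le_iff_le_add_card_filter_le (monotoneOn_row hrow (by omega) hbn) hc').2 hc.2
    have hstrict := hcol b c hb hbn (by omega) (by omega) (by omega) (by omega)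
    exact mem_filter.2 ⟨mem_Icc.2 ⟨hc.1, by omega⟩, by omega⟩
  have := card_le_card hsub
  rw [Nat.card_Icc] at this
  change _ ≤ mu b + #{c ∈ Icc (mu b + 1) (lam b) | Y b c ≤ a}
  omega

end Tableau

section ToHive

variable {n : ℕ} {mu lam : ℕ → ℕ} {Y : ℕ → ℕ → ℕ}

/-- `h_{a,b}` counts the boxes of `μ` in the top `b` rows together with the entries `≤ a`
in these rows. -/
def toHive (n : ℕ) (mu lam : ℕ → ℕ) (Y : ℕ → ℕ → ℕ) (a b : ℕ) : ℤ :=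
  if a ≤ b ∧ b ≤ n then ∑ j ∈ Icc 1 b, ((mu j : ℤ) + cntLE mu lam Y a j) else 0

theorem toHive_of_le {a b : ℕ} (hab : a ≤ b) (hbn : b ≤ n) :
    toHive n mu lam Y a b = ∑ j ∈ Icc 1 b, ((mu j : ℤ) + cntLE mu lam Y a j) :=
  if_pos ⟨hab, hbn⟩

theorem toHive_succ_left {a b : ℕ} (hab : a + 1 ≤ b) (hbn : b ≤ n) :
    toHive n mu lam Y (a + 1) b =
      toHive n mu lam Y a b + ∑ j ∈ Icc 1 b, (cnt mu lam Y (a + 1) j : ℤ) := by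
  simp only [toHive_of_le hab hbn, toHive_of_le (by omega : a ≤ b) hbn, cntLE_succ,
    ← sum_add_distrib]
  push_cast
  exact sum_congr rfl fun _ _ => by ring

theorem toHive_succ_right {a b : ℕ} (hab : a ≤ b) (hbn : b + 1 ≤ n) :
    toHive n mu lam Y a (b + 1) =
      toHive n mu lam Y a b + ((mu (b + 1) : ℤ) + cntLE mu lam Y a (b + 1)) := by
  rw [toHive_of_le (by omega) hbn, toHive_of_le hab (by omega), sum_Icc_succ_top (by omega)]

theorem isRC1_toHive : IsRC1 n (toHive n mu lam Y) := by
  intro a b ha hab hbn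
  obtain ⟨a, rfl⟩ := Nat.exists_eq_add_of_le' ha
  obtain ⟨b, rfl⟩ := Nat.exists_eq_add_of_le' (ha.trans hab.le)
  simp only [Nat.add_sub_cancel]
  rw [toHive_succ_left (by omega : a + 1 ≤ b + 1) hbn,
    toHive_succ_left (by omega : a + 1 ≤ b) (by omega), sum_Icc_succ_top (by omega)]
  have : (0 : ℤ) ≤ cnt mu lam Y (a + 1) (b + 1) := by positivity
  linarith

theorem isRC2_toHive (hrow : RowWeak n mu lam Y) (hcol : ColStrict n mu lam Y)
    (hlam : ∀ i, 1 ≤ i → lam (i + 1) ≤ lam i) (hmu : ∀ i, 1 ≤ i → mu (i + 1) ≤ mu i) :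
    IsRC2 n (toHive n mu lam Y) := by
  intro a b ha hab hbn
  obtain ⟨a, rfl⟩ := Nat.exists_eq_add_of_le' ha
  obtain ⟨b, rfl⟩ := Nat.exists_eq_add_of_le' (ha.trans hab)
  simp only [Nat.add_sub_cancel]
  rw [toHive_succ_right (a := a + 1) hab hbn,
    toHive_succ_right (a := a) (b := b) (by omega) (by omega)]
  have : (mu (b + 1 + 1) : ℤ) + cntLE mu lam Y (a + 1) (b + 1 + 1) ≤
      (mu (b + 1) : ℤ) + cntLE mu lam Y a (b + 1) := by
    exact_mod_cast
      add_cntLE_succ_le hrow hcol (by omega) hbn (hlam _ (by omega)) (hmu _ (by omega))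
  linarith

theorem isRC3_toHive (hL : RowLattice n mu lam Y) : IsRC3 n (toHive n mu lam Y) := by
  intro a b ha hab hbn
  obtain ⟨a, rfl⟩ := Nat.exists_eq_add_of_le' ha
  simp only [Nat.add_sub_cancel]
  rw [toHive_succ_left (by omega) hbn, toHive_succ_left hab (by omega)]
  have : (∑ j ∈ Icc 1 (b + 1), cnt mu lam Y (a + 1 + 1) j : ℤ) ≤
      ∑ j ∈ Icc 1 b, (cnt mu lam Y (a + 1) j : ℤ) := by
    exact_mod_cast hL (a + 1) b (by omega) hbn
  linarith

theorem isBoundary_toHive {nu : ℕ → ℕ} (hsub : ∀ j, mu j ≤ lam j)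
    (hent : EntriesIn n mu lam Y) (hcont : HasContent n mu lam nu Y) (hL : RowLattice n mu lam Y) :
    IsBoundary n (fun i => (mu i : ℤ)) (fun i => (nu i : ℤ)) (fun i => (lam i : ℤ))
      (toHive n mu lam Y) := by
  refine ⟨by simp [toHive], fun i _ hin => ?_, fun i _ hin => ?_, fun i _ hin => ?_⟩
  · rw [toHive_of_le (by omega) hin]
    refine sum_congr rfl fun j hj => ?_
    rw [cntLE_zero hent (mem_Icc.1 hj).1 (by grind)]
    simp
  · rw [toHive_of_le hin le_rfl, sum_add_distrib]
    congr 1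
    rw [← sum_congr rfl fun j hj => congrArg Nat.cast
        (cntLE_eq_sum_cnt hent (mem_Icc.1 hj).1 (mem_Icc.1 hj).2 i).symm]
    push_cast
    rw [sum_comm]
    refine sum_congr rfl fun k hk => ?_
    rw [← Nat.cast_sum, hcont k (mem_Icc.1 hk).1 (by grind)]
  · rw [toHive_of_le le_rfl hin]
    refine sum_congr rfl fun j hj => ?_
    have hj := mem_Icc.1 hj
    rw [hL.cntLE_of_le hj.1 (by omega) hj.2, Nat.cast_sub (hsub j)]
    ring

theorem toHive_eq_zero {a b : ℕ} (hab : ¬(a ≤ b ∧ b ≤ n)) : toHive n mu lam Y a b = 0 :=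
  if_neg hab

end ToHive

/-- The number of entries `≤ a` in row `j` of the tableau of the hive `h`. Row `j` has no
entries `> j`, and `h_{a,j}` lies outside the hive for `a > j`, hence the `min`. -/
def hiveCntLE (mu : ℕ → ℕ) (h : ℕ → ℕ → ℤ) (a j : ℕ) : ℤ :=
  h (min a j) j - h (min a (j - 1)) (j - 1) - mu j

noncomputable def ofHive (n : ℕ) (mu lam : ℕ → ℕ) (h : ℕ → ℕ → ℤ) (j c : ℕ) : ℕ :=
  if 1 ≤ j ∧ j ≤ n ∧ mu j < c ∧ c ≤ lam j then
    sInf {a : ℕ | (c : ℤ) ≤ mu j + hiveCntLE mu h a j} else 0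

section OfHive

variable {n : ℕ} {mu nu lam : ℕ → ℕ} {h : ℕ → ℕ → ℤ}

theorem hiveCntLE_of_lt {a j : ℕ} (haj : a < j) :
    hiveCntLE mu h a j = h a j - h a (j - 1) - mu j := by
  rw [hiveCntLE, min_eq_left haj.le, min_eq_left (by omega)]

theorem hiveCntLE_of_le
    (hbd : IsBoundary n (fun i => (mu i : ℤ)) (fun i => (nu i : ℤ)) (fun i => (lam i : ℤ)) h)
    {a j : ℕ} (hj : 1 ≤ j) (hjn : j ≤ n) (hja : j ≤ a) :
    hiveCntLE mu h a j = lam j - mu j := by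
  rw [hiveCntLE, min_eq_right hja, min_eq_right (by omega), hbd.lam_side hjn,
    hbd.lam_side (by omega), sum_Icc_one_eq_sum_pred_add _ hj]
  ring

theorem hiveCntLE_zero
    (hbd : IsBoundary n (fun i => (mu i : ℤ)) (fun i => (nu i : ℤ)) (fun i => (lam i : ℤ)) h)
    {j : ℕ} (hj : 1 ≤ j) (hjn : j ≤ n) : hiveCntLE mu h 0 j = 0 := by
  rw [hiveCntLE_of_lt hj, hbd.mu_side hjn, hbd.mu_side (by omega),
    sum_Icc_one_eq_sum_pred_add _ hj]
  ring

/-- Downward induction from `h_{n,n} - h_{n-1,n} = ν_n ≥ 0`, with RC(3) at `(j, j)` as the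
step. -/
theorem le_hive_diag (hrc3 : IsRC3 n h)
    (hbd : IsBoundary n (fun i => (mu i : ℤ)) (fun i => (nu i : ℤ)) (fun i => (lam i : ℤ)) h) :
    ∀ {j : ℕ}, 1 ≤ j → j ≤ n → h (j - 1) j ≤ h j j := by
  suffices ∀ k j, j + k = n → 1 ≤ j → h (j - 1) j ≤ h j j from
    fun {j} hj hjn => this (n - j) j (Nat.add_sub_cancel' hjn) hj
  intro k
  induction k with
  | zero =>
    intro j hjn hj
    rw [add_zero] at hjn
    subst hjn
    rw [hbd.nu_side le_rfl, hbd.nu_side (by omega),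
      sum_Icc_one_eq_sum_pred_add (fun k => (nu k : ℤ)) hj]
    simp
  | succ k ih =>
    intro j hjn hj
    have hrc := hrc3 j j hj le_rfl (by omega)
    have := ih (j + 1) (by omega) (by omega)
    simp only [Nat.add_sub_cancel] at this
    linarith

theorem hiveCntLE_monotone (hrc1 : IsRC1 n h) (hrc3 : IsRC3 n h)
    (hbd : IsBoundary n (fun i => (mu i : ℤ)) (fun i => (nu i : ℤ)) (fun i => (lam i : ℤ)) h)
    {j : ℕ} (hj : 1 ≤ j) (hjn : j ≤ n) : Monotone (hiveCntLE mu h · j) := by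
  refine monotone_nat_of_le_succ fun a => ?_
  rcases lt_trichotomy (a + 1) j with haj | haj | haj
  · have := hrc1 (a + 1) j (by omega) haj hjn
    rw [hiveCntLE_of_lt (by omega : a < j), hiveCntLE_of_lt haj]
    simp only [Nat.add_sub_cancel] at this
    linarith
  · subst haj
    rw [hiveCntLE_of_lt (by omega : a < a + 1), hiveCntLE, min_self, min_eq_right (by omega)]
    have := le_hive_diag hrc3 hbd hj hjn
    simp only [Nat.add_sub_cancel] at this ⊢
    linarith
  · rw [hiveCntLE_of_le hbd hj hjn (by omega), hiveCntLE_of_le hbd hj hjn (by omega)]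

theorem sum_add_hiveCntLE (h₀ : h 0 0 = 0) (a b : ℕ) :
    ∑ j ∈ Icc 1 b, ((mu j : ℤ) + hiveCntLE mu h a j) = h (min a b) b := by
  have := sum_Icc_one_sub_pred (fun j => h (min a j) j) b
  simp only [_root_.min_zero, h₀, sub_zero] at this
  rw [← this]
  exact sum_congr rfl fun j _ => by rw [hiveCntLE]; ring

theorem add_hiveCntLE_succ_le (hrc2 : IsRC2 n h)
    (hbd : IsBoundary n (fun i => (mu i : ℤ)) (fun i => (nu i : ℤ)) (fun i => (lam i : ℤ)) h)
    {j : ℕ} (hj : 1 ≤ j) (hjn : j + 1 ≤ n) (hlam : lam (j + 1) ≤ lam j) (a : ℕ) :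
    mu (j + 1) + hiveCntLE mu h (a + 1) (j + 1) ≤ mu j + hiveCntLE mu h a j := by
  rcases lt_or_ge a j with haj | haj
  · have := hrc2 (a + 1) j (by omega) haj hjn
    rw [hiveCntLE_of_lt (by omega : a + 1 < j + 1), hiveCntLE_of_lt haj]
    simp only [Nat.add_sub_cancel] at this ⊢
    linarith
  · rw [hiveCntLE_of_le hbd (by omega) hjn (by omega), hiveCntLE_of_le hbd hj (by omega) haj]
    have : (lam (j + 1) : ℤ) ≤ lam j := by exact_mod_cast hlam
    linarith

theorem ofHive_le_iff (hrc1 : IsRC1 n h) (hrc3 : IsRC3 n h)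
    (hbd : IsBoundary n (fun i => (mu i : ℤ)) (fun i => (nu i : ℤ)) (fun i => (lam i : ℤ)) h)
    {j c : ℕ} (hj : 1 ≤ j) (hjn : j ≤ n) (hc : c ∈ Icc (mu j + 1) (lam j)) (a : ℕ) :
    ofHive n mu lam h j c ≤ a ↔ (c : ℤ) ≤ mu j + hiveCntLE mu h a j := by
  have hc := mem_Icc.1 hc
  rw [ofHive, if_pos ⟨hj, hjn, hc.1, hc.2⟩]
  refine sInf_le_iff_of_monotone (fun _ _ hle => ?_) ⟨j, ?_⟩ a
  · gcongr
    exact hiveCntLE_monotone hrc1 hrc3 hbd hj hjn hle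
  · rw [hiveCntLE_of_le hbd hj hjn le_rfl]
    omega

theorem ofHive_mem_Icc (hrc1 : IsRC1 n h) (hrc3 : IsRC3 n h)
    (hbd : IsBoundary n (fun i => (mu i : ℤ)) (fun i => (nu i : ℤ)) (fun i => (lam i : ℤ)) h)
    {j c : ℕ} (hj : 1 ≤ j) (hjn : j ≤ n) (hc : c ∈ Icc (mu j + 1) (lam j)) :
    ofHive n mu lam h j c ∈ Icc 1 n := by
  have hle := ofHive_le_iff hrc1 hrc3 hbd hj hjn hc
  have hc := mem_Icc.1 hc
  have hpos : ¬ofHive n mu lam h j c ≤ 0 := by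
    rw [hle, hiveCntLE_zero hbd hj hjn]
    omega
  have hlen : ofHive n mu lam h j c ≤ n := by
    rw [hle, hiveCntLE_of_le hbd hj hjn hjn]
    omega
  exact mem_Icc.2 ⟨by omega, hlen⟩

theorem cntLE_ofHive (hrc1 : IsRC1 n h) (hrc3 : IsRC3 n h)
    (hbd : IsBoundary n (fun i => (mu i : ℤ)) (fun i => (nu i : ℤ)) (fun i => (lam i : ℤ)) h)
    {j : ℕ} (hj : 1 ≤ j) (hjn : j ≤ n) (a : ℕ) :
    (cntLE mu lam (ofHive n mu lam h) a j : ℤ) = hiveCntLE mu h a j := by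
  have hmono := hiveCntLE_monotone hrc1 hrc3 hbd hj hjn
  have hnonneg : 0 ≤ hiveCntLE mu h a j := hiveCntLE_zero hbd hj hjn ▸ hmono (Nat.zero_le a)
  have hle : hiveCntLE mu h a j ≤ lam j - mu j :=
    hiveCntLE_of_le hbd hj hjn (le_max_right a j) ▸ hmono (le_max_left a j)
  rw [cntLE, card_filter_le_eq_of_forall_le_iff (k := (hiveCntLE mu h a j).toNat) (by omega)
    fun c hc => (ofHive_le_iff hrc1 hrc3 hbd hj hjn hc a).trans (by omega)]
  omega

theorem sum_cnt_ofHive (hrc1 : IsRC1 n h) (hrc3 : IsRC3 n h)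
    (hbd : IsBoundary n (fun i => (mu i : ℤ)) (fun i => (nu i : ℤ)) (fun i => (lam i : ℤ)) h)
    {b : ℕ} (hbn : b ≤ n) (a : ℕ) :
    ∑ j ∈ Icc 1 b, (cnt mu lam (ofHive n mu lam h) (a + 1) j : ℤ) =
      h (min (a + 1) b) b - h (min a b) b := by
  rw [← sum_add_hiveCntLE hbd.1, ← sum_add_hiveCntLE hbd.1, ← sum_sub_distrib]
  refine sum_congr rfl fun j hj => ?_
  have hj := mem_Icc.1 hj
  rw [← cntLE_ofHive hrc1 hrc3 hbd hj.1 (by omega), ← cntLE_ofHive hrc1 hrc3 hbd hj.1 (by omega),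
    cntLE_succ]
  push_cast
  ring

theorem rowWeak_ofHive (hrc1 : IsRC1 n h) (hrc3 : IsRC3 n h)
    (hbd : IsBoundary n (fun i => (mu i : ℤ)) (fun i => (nu i : ℤ)) (fun i => (lam i : ℤ)) h) :
    RowWeak n mu lam (ofHive n mu lam h) := by
  intro j c c' hj hjn hc hcc' hc'
  have hle := ofHive_le_iff hrc1 hrc3 hbd hj hjn (mem_Icc.2 ⟨hc, by omega⟩)
  have hle' := ofHive_le_iff hrc1 hrc3 hbd hj hjn (mem_Icc.2 ⟨by omega, hc'⟩)
  exact (hle _).2 (le_trans (by exact_mod_cast hcc') ((hle' _).1 le_rfl))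

theorem colStrict_ofHive (hrc1 : IsRC1 n h) (hrc2 : IsRC2 n h) (hrc3 : IsRC3 n h)
    (hbd : IsBoundary n (fun i => (mu i : ℤ)) (fun i => (nu i : ℤ)) (fun i => (lam i : ℤ)) h)
    (hlam : ∀ i, 1 ≤ i → lam (i + 1) ≤ lam i) : ColStrict n mu lam (ofHive n mu lam h) := by
  intro j c hj hjn hc hcl hc' hcl'
  have hcell := mem_Icc.2 ⟨hc', hcl'⟩
  obtain ⟨a, ha⟩ : ∃ a, ofHive n mu lam h (j + 1) c = a + 1 :=
    Nat.exists_eq_add_of_le' (mem_Icc.1 (ofHive_mem_Icc hrc1 hrc3 hbd (by omega) hjn hcell)).1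
  have hbelow := (ofHive_le_iff hrc1 hrc3 hbd (by omega) hjn hcell (a + 1)).1 ha.le
  have := add_hiveCntLE_succ_le hrc2 hbd hj hjn (hlam j hj) a
  have := (ofHive_le_iff hrc1 hrc3 hbd hj (by omega) (mem_Icc.2 ⟨hc, hcl⟩) a).2 (by linarith)
  omega

theorem rowLattice_ofHive (hrc1 : IsRC1 n h) (hrc3 : IsRC3 n h)
    (hbd : IsBoundary n (fun i => (mu i : ℤ)) (fun i => (nu i : ℤ)) (fun i => (lam i : ℤ)) h) :
    RowLattice n mu lam (ofHive n mu lam h) := by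
  intro a b ha hbn
  obtain ⟨a, rfl⟩ := Nat.exists_eq_add_of_le' ha
  suffices ∑ j ∈ Icc 1 (b + 1), (cnt mu lam (ofHive n mu lam h) (a + 1 + 1) j : ℤ) ≤
      ∑ j ∈ Icc 1 b, (cnt mu lam (ofHive n mu lam h) (a + 1) j : ℤ) by exact_mod_cast this
  rw [sum_cnt_ofHive hrc1 hrc3 hbd hbn, sum_cnt_ofHive hrc1 hrc3 hbd (by omega)]
  rcases lt_or_ge a b with hab | hab
  · rw [min_eq_left (by omega : a + 1 + 1 ≤ b + 1), min_eq_left (by omega : a + 1 ≤ b + 1),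
      min_eq_left (by omega : a + 1 ≤ b), min_eq_left hab.le]
    have := hrc3 (a + 1) b (by omega) hab hbn
    simp only [Nat.add_sub_cancel] at this
    linarith
  · rw [min_eq_right (by omega : b + 1 ≤ a + 1 + 1), min_eq_right (by omega : b + 1 ≤ a + 1),
      min_eq_right (by omega : b ≤ a + 1), min_eq_right hab]
    simp

theorem hasContent_ofHive (hrc1 : IsRC1 n h) (hrc3 : IsRC3 n h)
    (hbd : IsBoundary n (fun i => (mu i : ℤ)) (fun i => (nu i : ℤ)) (fun i => (lam i : ℤ)) h) :
    HasContent n mu lam nu (ofHive n mu lam h) := by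
  intro k hk hkn
  obtain ⟨k, rfl⟩ := Nat.exists_eq_add_of_le' hk
  suffices ∑ j ∈ Icc 1 n, (cnt mu lam (ofHive n mu lam h) (k + 1) j : ℤ) = nu (k + 1) by
    exact_mod_cast this
  rw [sum_cnt_ofHive hrc1 hrc3 hbd le_rfl, min_eq_left hkn, min_eq_left (by omega),
    hbd.nu_side hkn, hbd.nu_side (by omega), sum_Icc_succ_top (by omega)]
  ring

theorem isLR_ofHive (hrc1 : IsRC1 n h) (hrc2 : IsRC2 n h) (hrc3 : IsRC3 n h)
    (hbd : IsBoundary n (fun i => (mu i : ℤ)) (fun i => (nu i : ℤ)) (fun i => (lam i : ℤ)) h)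
    (hlam : ∀ i, 1 ≤ i → lam (i + 1) ≤ lam i) : IsLR n mu lam nu (ofHive n mu lam h) :=
  ⟨rowWeak_ofHive hrc1 hrc3 hbd, colStrict_ofHive hrc1 hrc2 hrc3 hbd hlam,
    fun _ _ hj hjn hc hcl => mem_Icc.1 (ofHive_mem_Icc hrc1 hrc3 hbd hj hjn (mem_Icc.2 ⟨hc, hcl⟩)),
    (isYamanouchiWord_revReadingWord_iff (rowWeak_ofHive hrc1 hrc3 hbd)).2
      (rowLattice_ofHive hrc1 hrc3 hbd),
    hasContent_ofHive hrc1 hrc3 hbd⟩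

theorem normFilling_ofHive : NormFilling n mu lam (ofHive n mu lam h) :=
  fun _ _ hc => if_neg hc

end OfHive

variable {n : ℕ} {mu nu lam : ℕ → ℕ}

theorem isHive_toHive (hlam : IsPartition n lam) (hmu : IsPartition n mu)
    (hsub : ∀ j, mu j ≤ lam j) {Y : ℕ → ℕ → ℕ} (hY : IsLR n mu lam nu Y) :
    IsRC1 n (toHive n mu lam Y) ∧ IsRC2 n (toHive n mu lam Y) ∧ IsRC3 n (toHive n mu lam Y) ∧
      IsBoundary n (fun i => (mu i : ℤ)) (fun i => (nu i : ℤ)) (fun i => (lam i : ℤ))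
        (toHive n mu lam Y) ∧
      ∀ a b, ¬(a ≤ b ∧ b ≤ n) → toHive n mu lam Y a b = 0 := by
  obtain ⟨hrow, hcol, hent, hyam, hcont⟩ := hY
  have hL := (isYamanouchiWord_revReadingWord_iff hrow).1 hyam
  exact ⟨isRC1_toHive, isRC2_toHive hrow hcol hlam.1 hmu.1, isRC3_toHive hL,
    isBoundary_toHive hsub hent hcont hL, fun _ _ => toHive_eq_zero⟩

theorem hiveCntLE_toHive {Y : ℕ → ℕ → ℕ} (hL : RowLattice n mu lam Y) {j : ℕ} (hj : 1 ≤ j)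
    (hjn : j ≤ n) (a : ℕ) : hiveCntLE mu (toHive n mu lam Y) a j = cntLE mu lam Y a j := by
  have hmin : ∀ b, b ≤ j → ∑ j' ∈ Icc 1 b, ((mu j' : ℤ) + cntLE mu lam Y (min a b) j') =
      ∑ j' ∈ Icc 1 b, ((mu j' : ℤ) + cntLE mu lam Y a j') := fun b hb =>
    sum_congr rfl fun j' hj' => by
      rw [hL.cntLE_min (mem_Icc.1 hj').1 (mem_Icc.1 hj').2 (by omega)]
  rw [hiveCntLE, toHive_of_le (min_le_right _ _) hjn, toHive_of_le (min_le_right _ _) (by omega),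
    hmin j le_rfl, hmin (j - 1) (by omega), sum_Icc_one_eq_sum_pred_add _ hj]
  ring

theorem ofHive_toHive (hlam : IsPartition n lam) (hmu : IsPartition n mu)
    (hsub : ∀ j, mu j ≤ lam j) {Y : ℕ → ℕ → ℕ} (hY : IsLR n mu lam nu Y)
    (hnorm : NormFilling n mu lam Y) : ofHive n mu lam (toHive n mu lam Y) = Y := by
  obtain ⟨hrc1, -, hrc3, hbd, -⟩ := isHive_toHive hlam hmu hsub hY
  have hL := (isYamanouchiWord_revReadingWord_iff hY.1).1 hY.2.2.2.1
  funext j c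
  by_cases hcell : 1 ≤ j ∧ j ≤ n ∧ mu j < c ∧ c ≤ lam j
  · obtain ⟨hj, hjn, hc, hcl⟩ := hcell
    have hc := mem_Icc.2 ⟨hc, hcl⟩
    refine eq_of_forall_ge_iff fun a => ?_
    rw [ofHive_le_iff hrc1 hrc3 hbd hj hjn hc, hiveCntLE_toHive hL hj hjn,
      le_iff_le_add_card_filter_le (monotoneOn_row hY.1 hj hjn) hc]
    exact_mod_cast Iff.rfl
  · rw [normFilling_ofHive j c hcell, hnorm j c hcell]

theorem toHive_ofHive {h : ℕ → ℕ → ℤ} (hrc1 : IsRC1 n h) (hrc3 : IsRC3 n h)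
    (hbd : IsBoundary n (fun i => (mu i : ℤ)) (fun i => (nu i : ℤ)) (fun i => (lam i : ℤ)) h)
    (hnorm : ∀ a b, ¬(a ≤ b ∧ b ≤ n) → h a b = 0) :
    toHive n mu lam (ofHive n mu lam h) = h := by
  funext a b
  by_cases hab : a ≤ b ∧ b ≤ n
  · rw [toHive_of_le hab.1 hab.2]
    refine (sum_congr rfl fun j hj => ?_).trans
      ((sum_add_hiveCntLE (mu := mu) hbd.1 a b).trans (by rw [min_eq_left hab.1]))
    rw [cntLE_ofHive hrc1 hrc3 hbd (mem_Icc.1 hj).1 ((mem_Icc.1 hj).2.trans hab.2)]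
  · rw [toHive_eq_zero hab, hnorm a b hab]

end LRHive

open LRHive

theorem lr_hive_bijection_general (n : ℕ) (lam mu nu : ℕ → ℕ)
    (hlam : IsPartition n lam) (hmu : IsPartition n mu)
    (hsub : ∀ j, mu j ≤ lam j) :
    Nonempty
      ({Y : ℕ → ℕ → ℕ // IsLR n mu lam nu Y ∧ NormFilling n mu lam Y} ≃
        {h : ℕ → ℕ → ℤ // IsRC1 n h ∧ IsRC2 n h ∧ IsRC3 n h ∧
          IsBoundary n (fun i => (mu i : ℤ)) (fun i => (nu i : ℤ))
            (fun i => (lam i : ℤ)) h ∧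
          ∀ a b, ¬(a ≤ b ∧ b ≤ n) → h a b = 0}) :=
  ⟨{ toFun := fun Y => ⟨toHive n mu lam Y, isHive_toHive hlam hmu hsub Y.2.1⟩
     invFun := fun h => ⟨ofHive n mu lam h,
       isLR_ofHive h.2.1 h.2.2.1 h.2.2.2.1 h.2.2.2.2.1 hlam.1, normFilling_ofHive⟩
     left_inv := fun Y => Subtype.ext (ofHive_toHive hlam hmu hsub Y.2.1 Y.2.2)
     right_inv := fun h => Subtype.ext
       (toHive_ofHive h.2.1 h.2.2.2.1 h.2.2.2.2.1 h.2.2.2.2.2) }⟩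

/-- Corollary 4.6 / 5.4: there is a bijection between the LR tableaux
`LR(λ/μ, ν)` and the hives `H°(μ,ν,λ)` with boundary determined by `μ, ν, λ`. -/
theorem lr_hive_bijection (n : ℕ) (lam mu nu : ℕ → ℕ)
    (hlam : IsPartition n lam) (hmu : IsPartition n mu)
    (hnu : IsPartition n nu) (hsub : ∀ j, mu j ≤ lam j) :
    Nonempty
      ({Y : ℕ → ℕ → ℕ // IsLR n mu lam nu Y ∧ NormFilling n mu lam Y} ≃
        {h : ℕ → ℕ → ℤ // IsRC1 n h ∧ IsRC2 n h ∧ IsRC3 n h ∧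
          IsBoundary n (fun i => (mu i : ℤ)) (fun i => (nu i : ℤ))
            (fun i => (lam i : ℤ)) h ∧
          ∀ a b, ¬(a ≤ b ∧ b ≤ n) → h a b = 0}) :=
  lr_hive_bijection_general n lam mu nu hlam hmu hsub
end
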